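/- Let U be a critical-point-free harmonic function on a domain Ω ⊆ ℝⁿ and let α : (−δ, δ) → Ω be an integral curve of the unit vector field ∇U/‖∇U‖. Then for all s ∈ (−δ, δ), ‖∇U(α(s))‖ = ‖∇U(α(0))‖ · exp((n−1) ∫₀ˢ H(α(ξ)) dξ), where H(p) is the mean curvature at p of the level hypersurface of U through p, oriented by ∇U/‖∇U‖. -/

import Mathlib

open scoped InnerProductSpace

/-- The Hessian quadratic form of `f` at `p` evaluated at `(v, v)`
(the second directional derivative of `f` at `p` along `v`). -/
noncomputable def hessQF {n : ℕ} (f : EuclideanSpace ℝ (Fin n) → ℝ)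
    (p v : EuclideanSpace ℝ (Fin n)) : ℝ :=
  ⟪fderiv ℝ (gradient f) p v, v⟫_ℝ

/-- The Laplacian of `f` at `p`. -/
noncomputable def lap {n : ℕ} (f : EuclideanSpace ℝ (Fin n) → ℝ)
    (p : EuclideanSpace ℝ (Fin n)) : ℝ :=
  ∑ i : Fin n,
    ⟪fderiv ℝ (gradient f) p (EuclideanSpace.single i 1), EuclideanSpace.single i (1:ℝ)⟫_ℝ

/-!
Along an integral curve `α` of `N = ∇U/‖∇U‖`, the derivative of `‖∇U ∘ α‖` is the normal second
derivative `D²U(N, N)`. Since `ΔU = 0`, the trace of the Hessian over an orthonormal frame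
`N, e₁, …, eₙ₋₁` vanishes, so `D²U(N, N) = -∑ D²U(eᵢ, eᵢ) = (n - 1) H ‖∇U‖`. Thus `‖∇U ∘ α‖`
solves the linear equation `φ' = (n - 1) (H ∘ α) φ`, whose solution is the stated exponential.
-/

open InnerProductSpace Set

theorem HasDerivAt.norm {F : Type*} [NormedAddCommGroup F] [InnerProductSpace ℝ F]
    {f : ℝ → F} {f' : F} {x : ℝ} (hf : HasDerivAt f f' x) (h0 : f x ≠ 0) :
    HasDerivAt (fun t => ‖f t‖) (⟪f x, f'⟫_ℝ / ‖f x‖) x := by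
  have hsq : (fun t => ‖f t‖) = fun t => √(‖f t‖ ^ 2) :=
    funext fun t => (Real.sqrt_sq (norm_nonneg _)).symm
  rw [hsq]
  convert hf.norm_sq.sqrt (by positivity) using 1
  rw [Real.sqrt_sq (norm_nonneg _)]
  field_simp

theorem ContDiffAt.gradient {F : Type*} [NormedAddCommGroup F] [InnerProductSpace ℝ F]
    [CompleteSpace F] {f : F → ℝ} {x : F} {m n : WithTop ℕ∞} (hf : ContDiffAt ℝ n f x)
    (hmn : m + 1 ≤ n) : ContDiffAt ℝ m (gradient f) x :=
  (toDual ℝ F).symm.contDiff.comp_contDiffAt x (hf.fderiv_right hmn)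

theorem exists_orthonormalBasis_zero_eq {E : Type*} [NormedAddCommGroup E]
    [InnerProductSpace ℝ E] [FiniteDimensional ℝ E] {m : ℕ} (hm : Module.finrank ℝ E = m + 1)
    {u : E} (hu : ‖u‖ = 1) : ∃ b : OrthonormalBasis (Fin (m + 1)) ℝ E, b 0 = u := by
  have hu' : Orthonormal ℝ (({0} : Set (Fin (m + 1))).domRestrict fun _ => u) :=
    ⟨fun _ => hu, fun i j hij => absurd (Subsingleton.elim i j) hij⟩
  obtain ⟨b, hb⟩ := hu'.exists_orthonormalBasis_extension_of_card_eq (by simpa using hm)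
  exact ⟨b, hb 0 rfl⟩

theorem eq_mul_exp_integral_of_hasDerivAt {s : Set ℝ} (hs : IsOpen s) (hs' : IsPreconnected s)
    {φ K : ℝ → ℝ} (hK : ContinuousOn K s) (hφ : ∀ t ∈ s, HasDerivAt φ (K t * φ t) t)
    {t₀ t : ℝ} (ht₀ : t₀ ∈ s) (ht : t ∈ s) :
    φ t = φ t₀ * Real.exp (∫ ξ in t₀..t, K ξ) := by
  set F := fun t => ∫ ξ in t₀..t, K ξ
  have hF : ∀ t ∈ s, HasDerivAt F (K t) t := fun t ht =>
    intervalIntegral.integral_hasDerivAt_right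
      ((hK.mono (hs'.ordConnected.uIcc_subset ht₀ ht)).intervalIntegrable)
      (hK.stronglyMeasurableAtFilter hs t ht) (hK.continuousAt (hs.mem_nhds ht))
  have hG : ∀ t ∈ s, HasDerivAt (fun t => φ t * Real.exp (-F t)) 0 t := fun t ht => by
    have h := (hφ t ht).fun_mul (hF t ht).fun_neg.exp
    rwa [show K t * φ t * Real.exp (-F t) + φ t * (Real.exp (-F t) * -K t) = 0 by ring] at h
  have hconst := hs.is_const_of_deriv_eq_zero hs'
    (fun t ht => (hG t ht).differentiableAt.differentiableWithinAt)
    (fun t ht => (hG t ht).deriv) ht ht₀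
  simp only [F, intervalIntegral.integral_same, neg_zero, Real.exp_zero, mul_one,
    Real.exp_neg] at hconst
  rw [← hconst]
  field_simp

section Euclidean

variable {n : ℕ} {U : EuclideanSpace ℝ (Fin n) → ℝ}

noncomputable def unitGradient (U : EuclideanSpace ℝ (Fin n) → ℝ)
    (p : EuclideanSpace ℝ (Fin n)) : EuclideanSpace ℝ (Fin n) :=
  ‖gradient U p‖⁻¹ • gradient U p

theorem norm_unitGradient {p : EuclideanSpace ℝ (Fin n)} (hg : gradient U p ≠ 0) :
    ‖unitGradient U p‖ = 1 := by
  rw [unitGradient, norm_smul, norm_inv, norm_norm, inv_mul_cancel₀ (norm_ne_zero_iff.2 hg)]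

theorem lap_eq_trace (p : EuclideanSpace ℝ (Fin n)) :
    lap U p = LinearMap.trace ℝ _ (fderiv ℝ (gradient U) p).toLinearMap := by
  rw [LinearMap.trace_eq_sum_inner _ (EuclideanSpace.basisFun (Fin n) ℝ), lap]
  simp [real_inner_comm]

theorem sub_one_mul_eq_hessQF_unitGradient_div (hn : 2 ≤ n) {p : EuclideanSpace ℝ (Fin n)}
    (hg : gradient U p ≠ 0) (hlap : lap U p = 0) {Hp : ℝ}
    (hH : ∀ b : Fin (n - 1) → EuclideanSpace ℝ (Fin n), Orthonormal ℝ b →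
      (∀ i, ⟪b i, unitGradient U p⟫_ℝ = 0) →
      Hp = (∑ i, -(hessQF U p (b i)) / ‖gradient U p‖) / (n - 1)) :
    (n - 1) * Hp = hessQF U p (unitGradient U p) / ‖gradient U p‖ := by
  obtain ⟨b, hb⟩ := exists_orthonormalBasis_zero_eq (m := n - 1)
    (by rw [finrank_euclideanSpace_fin]; omega) (norm_unitGradient hg)
  have htrace : hessQF U p (unitGradient U p) + ∑ i : Fin (n - 1), hessQF U p (b i.succ) = 0 := by
    rw [← hlap, lap_eq_trace, LinearMap.trace_eq_sum_inner _ b, Fin.sum_univ_succ, hb]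
    simp [hessQF, real_inner_comm]
  have hn1 : (n : ℝ) - 1 ≠ 0 := by
    have : (2 : ℝ) ≤ n := by exact_mod_cast hn
    linarith
  rw [hH (fun i => b i.succ) (b.orthonormal.comp _ (Fin.succ_injective _))
    (fun i => hb ▸ b.orthonormal.2 (Fin.succ_ne_zero i))]
  rw [← Finset.sum_div, Finset.sum_neg_distrib, eq_neg_of_add_eq_zero_right htrace, neg_neg]
  field_simp

theorem hasDerivAt_norm_gradient_comp {α : ℝ → EuclideanSpace ℝ (Fin n)} {s : ℝ}
    (hU : ContDiffAt ℝ 2 U (α s)) (hg : gradient U (α s) ≠ 0)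
    (hα : HasDerivAt α (unitGradient U (α s)) s) :
    HasDerivAt (fun t => ‖gradient U (α t)‖) (hessQF U (α s) (unitGradient U (α s))) s := by
  have hgα : HasDerivAt (fun t => gradient U (α t)) _ s :=
    ((hU.gradient (m := 1) le_rfl).differentiableAt one_ne_zero).hasFDerivAt.comp_hasDerivAt s hα
  convert hgα.norm hg using 1
  rw [hessQF, real_inner_comm, div_eq_inv_mul]
  nth_rw 1 [unitGradient]
  rw [real_inner_smul_left]

theorem continuousAt_hessQF_unitGradient_div_norm {p : EuclideanSpace ℝ (Fin n)}
    (hU : ContDiffAt ℝ 2 U p) (hg : gradient U p ≠ 0) :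
    ContinuousAt (fun q => hessQF U q (unitGradient U q) / ‖gradient U q‖) p := by
  have hgrad := hU.gradient (m := 1) le_rfl
  have hA : ContinuousAt (fderiv ℝ (gradient U)) p :=
    (hgrad.fderiv_right (m := 0) le_rfl).continuousAt
  have hg' : ‖gradient U p‖ ≠ 0 := norm_ne_zero_iff.2 hg
  have hN : ContinuousAt (unitGradient U) p :=
    (hgrad.continuousAt.norm.inv₀ hg').smul hgrad.continuousAt
  exact ((hA.clm_apply hN).inner hN).div hgrad.continuousAt.norm hg'

end Euclidean

theorem stmt5 {n : ℕ} (hn : 2 ≤ n)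
    {Ω : Set (EuclideanSpace ℝ (Fin n))} (hΩ : IsOpen Ω)
    (U : EuclideanSpace ℝ (Fin n) → ℝ) (hU : ContDiffOn ℝ 2 U Ω)
    (hgrad : ∀ p ∈ Ω, gradient U p ≠ 0)
    (hharm : ∀ p ∈ Ω, lap U p = 0)
    (N : EuclideanSpace ℝ (Fin n) → EuclideanSpace ℝ (Fin n))
    (hN : ∀ p ∈ Ω, N p = ‖gradient U p‖⁻¹ • gradient U p)
    (H : EuclideanSpace ℝ (Fin n) → ℝ)
    -- H(p) is the mean curvature of the level set {U = U(p)} at p: the average over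
    -- unit tangent vectors v of −D²_v U(p)/‖∇U(p)‖
    (hH : ∀ p ∈ Ω, ∀ b : Fin (n - 1) → EuclideanSpace ℝ (Fin n),
      Orthonormal ℝ b → (∀ i, ⟪b i, N p⟫_ℝ = 0) →
      H p = (∑ i, -(hessQF U p (b i)) / ‖gradient U p‖) / (n - 1))
    (δ : ℝ) (hδ : 0 < δ)
    (α : ℝ → EuclideanSpace ℝ (Fin n))
    (hα : ∀ s ∈ Set.Ioo (-δ) δ, α s ∈ Ω ∧ HasDerivAt α (N (α s)) s) :
    ∀ s ∈ Set.Ioo (-δ) δ,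
      ‖gradient U (α s)‖ =
        ‖gradient U (α 0)‖ * Real.exp ((n - 1) * ∫ ξ in (0:ℝ)..s, H (α ξ)) := by
  intro s hs
  have hΩα : ∀ t ∈ Ioo (-δ) δ, α t ∈ Ω := fun t ht => (hα t ht).1
  have hNα : ∀ t ∈ Ioo (-δ) δ, N (α t) = unitGradient U (α t) := fun t ht => hN _ (hΩα t ht)
  have hC2 : ∀ t ∈ Ioo (-δ) δ, ContDiffAt ℝ 2 U (α t) := fun t ht =>
    hU.contDiffAt (hΩ.mem_nhds (hΩα t ht))
  have hK : ∀ t ∈ Ioo (-δ) δ, (n - 1) * H (α t) =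
      hessQF U (α t) (unitGradient U (α t)) / ‖gradient U (α t)‖ := fun t ht =>
    sub_one_mul_eq_hessQF_unitGradient_div hn (hgrad _ (hΩα t ht)) (hharm _ (hΩα t ht))
      (hNα t ht ▸ hH _ (hΩα t ht))
  have hcont : ContinuousOn (fun t => (n - 1) * H (α t)) (Ioo (-δ) δ) := fun t ht =>
    ((continuousAt_hessQF_unitGradient_div_norm (hC2 t ht) (hgrad _ (hΩα t ht))).comp
      (hα t ht).2.continuousAt).continuousWithinAt.congr hK (hK t ht)
  have hderiv : ∀ t ∈ Ioo (-δ) δ, HasDerivAt (fun t => ‖gradient U (α t)‖)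
      ((n - 1) * H (α t) * ‖gradient U (α t)‖) t := fun t ht => by
    rw [hK t ht, div_mul_cancel₀ _ (norm_ne_zero_iff.2 (hgrad _ (hΩα t ht)))]
    exact hasDerivAt_norm_gradient_comp (hC2 t ht) (hgrad _ (hΩα t ht)) (hNα t ht ▸ (hα t ht).2)
  rw [← intervalIntegral.integral_const_mul]
  exact eq_mul_exp_integral_of_hasDerivAt isOpen_Ioo isPreconnected_Ioo hcont hderiv
    ⟨neg_lt_zero.2 hδ, hδ⟩ hs
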